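/- arXiv:2105.07097 — 4 statements merged into one kernel-verified Lean document; each statement's English description precedes it below -/
import Mathlib

section
/- Given any n×m row-stochastic posterior matrix B with no zero column and any strictly positive prior p in its 'Bayes-plausible' relation (i.e., Σ_s α_s B(s,·) = p for some probability weights α_s > 0), the matrix defined by I(θ,s) := B(s,θ)·α_s / p(θ) is a valid information structure (row-stochastic m×n), and Bayesian updating from prior p via I reproduces B. -/
open Matrix

namespace Matrix

variable {σ Θ 𝕜 : Type*}

/-- The signal distribution `I(θ, s)` under which the posteriors `B` arise with probabilities `α`
from the prior `p`. -/
def bayesInfo [Field 𝕜] (B : Matrix σ Θ 𝕜) (α : σ → 𝕜) (p : Θ → 𝕜) : Matrix Θ σ 𝕜 :=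
  of fun θ s => B s θ * α s / p θ

section Field

variable [Field 𝕜] {B : Matrix σ Θ 𝕜} {α : σ → 𝕜} {p : Θ → 𝕜}

theorem mul_bayesInfo {θ : Θ} (hp : p θ ≠ 0) (s : σ) :
    p θ * bayesInfo B α p θ s = B s θ * α s :=
  mul_div_cancel₀ _ hp

theorem sum_bayesInfo_eq_one [Fintype σ] {θ : Θ} (hpdef : p θ = ∑ s, α s * B s θ)
    (hp : p θ ≠ 0) :
    ∑ s, bayesInfo B α p θ s = 1 := by
  simp only [bayesInfo, of_apply, ← Finset.sum_div]
  rw [div_eq_one_iff_eq hp, hpdef]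
  simp only [mul_comm]

theorem sum_mul_bayesInfo [Fintype Θ] (hBrow : ∀ s, ∑ θ, B s θ = 1) (hp : ∀ θ, p θ ≠ 0) (s : σ) :
    ∑ θ, p θ * bayesInfo B α p θ s = α s := by
  simp only [mul_bayesInfo (hp _), ← Finset.sum_mul, hBrow, one_mul]

theorem bayes_update_bayesInfo [Fintype Θ] (hBrow : ∀ s, ∑ θ, B s θ = 1)
    (hp : ∀ θ, p θ ≠ 0) {s : σ} (hα : α s ≠ 0) (θ : Θ) :
    p θ * bayesInfo B α p θ s / ∑ θ', p θ' * bayesInfo B α p θ' s = B s θ := by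
  rw [sum_mul_bayesInfo hBrow hp, mul_bayesInfo (hp θ), mul_div_cancel_right₀ _ hα]

end Field

theorem bayesInfo_nonneg [Field 𝕜] [LinearOrder 𝕜] [IsStrictOrderedRing 𝕜]
    {B : Matrix σ Θ 𝕜} {α : σ → 𝕜} {p : Θ → 𝕜} {θ : Θ} {s : σ}
    (hB : 0 ≤ B s θ) (hα : 0 ≤ α s) (hp : 0 ≤ p θ) : 0 ≤ bayesInfo B α p θ s :=
  div_nonneg (mul_nonneg hB hα) hp

end Matrix

theorem stmt8_general (n m : ℕ) (B : Matrix (Fin n) (Fin m) ℝ)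
    (hBnn : ∀ s θ, 0 ≤ B s θ) (hBrow : ∀ s, ∑ θ, B s θ = 1)
    (α : Fin n → ℝ) (hα : ∀ s, 0 < α s)
    (p : Fin m → ℝ) (hpdef : ∀ θ, p θ = ∑ s, α s * B s θ) (hp : ∀ θ, 0 < p θ)
    (I : Matrix (Fin m) (Fin n) ℝ)
    (hI : ∀ θ s, I θ s = B s θ * α s / p θ) :
    (∀ θ s, 0 ≤ I θ s) ∧ (∀ θ, ∑ s, I θ s = 1) ∧
    (∀ s, ∑ θ, p θ * I θ s = α s) ∧
    (∀ s θ, p θ * I θ s / ∑ θ', p θ' * I θ' s = B s θ) := by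
  obtain rfl : I = bayesInfo B α p := Matrix.ext hI
  have hp0 : ∀ θ, p θ ≠ 0 := fun θ => (hp θ).ne'
  exact ⟨fun θ s => bayesInfo_nonneg (hBnn s θ) (hα s).le (hp θ).le,
    fun θ => sum_bayesInfo_eq_one (hpdef θ) (hp0 θ),
    sum_mul_bayesInfo hBrow hp0,
    fun s => bayes_update_bayesInfo hBrow hp0 (hα s).ne'⟩

theorem stmt8 (n m : ℕ) (B : Matrix (Fin n) (Fin m) ℝ)
    (hBnn : ∀ s θ, 0 ≤ B s θ) (hBrow : ∀ s, ∑ θ, B s θ = 1)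
    (α : Fin n → ℝ) (hα : ∀ s, 0 < α s) (hαsum : ∑ s, α s = 1)
    (p : Fin m → ℝ) (hpdef : ∀ θ, p θ = ∑ s, α s * B s θ) (hp : ∀ θ, 0 < p θ)
    (I : Matrix (Fin m) (Fin n) ℝ)
    (hI : ∀ θ s, I θ s = B s θ * α s / p θ) :
    (∀ θ s, 0 ≤ I θ s) ∧ (∀ θ, ∑ s, I θ s = 1) ∧
    (∀ s, ∑ θ, p θ * I θ s = α s) ∧
    (∀ s θ, p θ * I θ s / ∑ θ', p θ' * I θ' s = B s θ) :=
  stmt8_general n m B hBnn hBrow α hα p hpdef hp I hI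
end

section
/- If an n×n row-stochastic matrix Q with strictly positive entries has eigenvalue 1, then the left eigenspace for eigenvalue 1 is one-dimensional and contains a unique vector with strictly positive entries summing to 1 (the stationary distribution). -/
/-!
If `w Q = w`, then `|w| Q ≥ |w|` entrywise, strictly so at every entry when `w` has entries of both
signs, because every entry of `Q` is positive. Since `Q` is row-stochastic, right multiplication by
`Q` preserves the sum of entries, so `|w|` and `|w| Q` have the same sum: hence every fixed vector
has constant sign, and a fixed vector with entry sum `0` vanishes. This makes `w ↦ ∑ᵢ wᵢ` injective
on the left eigenspace for `1`, which is nonzero because `Q 𝟙 = 𝟙`.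
-/

open Matrix Finset

theorem Finset.abs_sum_lt_sum_abs {ι G : Type*} [AddCommGroup G] [LinearOrder G]
    [IsOrderedAddMonoid G] {s : Finset ι} {f : ι → G} {i j : ι} (hi : i ∈ s) (hj : j ∈ s)
    (hfi : f i < 0) (hfj : 0 < f j) : |∑ k ∈ s, f k| < ∑ k ∈ s, |f k| := by
  rw [abs_lt, ← sum_neg_distrib]
  constructor
  · exact sum_lt_sum (fun k _ => neg_abs_le (f k)) ⟨j, hj, by rw [abs_of_pos hfj]; exact Left.neg_lt_self hfj⟩
  · exact sum_lt_sum (fun k _ => le_abs_self (f k)) ⟨i, hi, by rw [abs_of_neg hfi]; exact Right.self_lt_neg hfi⟩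

namespace Matrix

theorem exists_vecMul_eq_self_of_mulVec_eq_self {ι K : Type*} [Fintype ι] [DecidableEq ι]
    [Field K] {M : Matrix ι ι K} {v : ι → K} (hv : v ≠ 0) (hMv : M *ᵥ v = v) :
    ∃ w ≠ 0, w ᵥ* M = w := by
  have hdet : (M - 1).det = 0 :=
    exists_mulVec_eq_zero_iff.mp ⟨v, hv, by rw [sub_mulVec, one_mulVec, hMv, sub_self]⟩
  obtain ⟨w, hw, hwM⟩ := exists_vecMul_eq_zero_iff.mpr hdet
  exact ⟨w, hw, by rwa [vecMul_sub, vecMul_one, sub_eq_zero] at hwM⟩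

theorem sum_vecMul_of_sum_row_eq_one {ι R : Type*} [Fintype ι] [NonAssocSemiring R]
    {Q : Matrix ι ι R} (hQrow : ∀ i, ∑ j, Q i j = 1) (x : ι → R) :
    ∑ i, (x ᵥ* Q) i = ∑ i, x i := by
  simp only [vecMul_apply_eq_sum]
  rw [sum_comm]
  simp only [← mul_sum, hQrow, mul_one]

section PositiveStochastic

variable {ι : Type*} [Fintype ι] {Q : Matrix ι ι ℝ}

theorem pos_of_vecMul_eq_self (hQpos : ∀ i j, 0 < Q i j) {w : ι → ℝ} (hw : w ᵥ* Q = w)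
    (hw0 : 0 ≤ w) (hne : w ≠ 0) (i : ι) : 0 < w i := by
  obtain ⟨k, hk⟩ := Function.ne_iff.mp hne
  rw [← hw, vecMul_apply_eq_sum]
  exact sum_pos' (fun j _ => mul_nonneg (hw0 j) (hQpos j i).le)
    ⟨k, mem_univ k, mul_pos ((hw0 k).lt_of_ne' hk) (hQpos k i)⟩

variable (hQpos : ∀ i j, 0 < Q i j) (hQrow : ∀ i, ∑ j, Q i j = 1)
include hQpos hQrow

theorem nonneg_or_nonpos_of_vecMul_eq_self {w : ι → ℝ} (hw : w ᵥ* Q = w) : 0 ≤ w ∨ w ≤ 0 := by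
  by_contra! h
  obtain ⟨⟨a, ha⟩, b, hb⟩ : (∃ a, w a < 0) ∧ ∃ b, 0 < w b := by
    simpa [Pi.le_def, and_comm] using h
  have hlt : ∀ i, |w i| < (|w| ᵥ* Q) i := fun i =>
    calc |w i| = |∑ j, w j * Q j i| := by rw [← vecMul_apply_eq_sum, hw]
      _ < ∑ j, |w j * Q j i| := abs_sum_lt_sum_abs (mem_univ a) (mem_univ b)
          (mul_neg_of_neg_of_pos ha (hQpos a i)) (mul_pos hb (hQpos b i))
      _ = (|w| ᵥ* Q) i := by
          simp only [vecMul_apply_eq_sum, abs_mul, abs_of_pos (hQpos _ i), Pi.abs_apply]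
  have := sum_lt_sum_of_nonempty ⟨a, mem_univ a⟩ fun i _ => hlt i
  rw [sum_vecMul_of_sum_row_eq_one hQrow] at this
  exact lt_irrefl _ this

theorem eq_zero_of_vecMul_eq_self_of_sum_eq_zero {w : ι → ℝ} (hw : w ᵥ* Q = w)
    (hs : ∑ i, w i = 0) : w = 0 := by
  funext i
  rcases nonneg_or_nonpos_of_vecMul_eq_self hQpos hQrow hw with h | h
  · exact (sum_eq_zero_iff_of_nonneg fun j _ => h j).mp hs i (mem_univ i)
  · exact (sum_eq_zero_iff_of_nonpos fun j _ => h j).mp hs i (mem_univ i)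

theorem eq_sum_smul_of_vecMul_eq_self {v w : ι → ℝ} (hv : v ᵥ* Q = v) (hvsum : ∑ i, v i = 1)
    (hw : w ᵥ* Q = w) : w = (∑ i, w i) • v := by
  have hfix : (w - (∑ i, w i) • v) ᵥ* Q = w - (∑ i, w i) • v := by
    rw [sub_vecMul, smul_vecMul, hw, hv]
  have hsum : ∑ i, (w - (∑ i, w i) • v) i = 0 := by
    simp [sum_sub_distrib, ← mul_sum, hvsum]
  exact sub_eq_zero.mp (eq_zero_of_vecMul_eq_self_of_sum_eq_zero hQpos hQrow hfix hsum)

theorem exists_stationary [Nonempty ι] :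
    ∃ v : ι → ℝ, (∀ i, 0 < v i) ∧ ∑ i, v i = 1 ∧ v ᵥ* Q = v := by
  classical
  have hQ1 : Q *ᵥ 1 = 1 := funext fun i => by simp [mulVec, dotProduct, hQrow i]
  obtain ⟨w, hw0, hw⟩ := exists_vecMul_eq_self_of_mulVec_eq_self one_ne_zero hQ1
  have hs : ∑ i, w i ≠ 0 := fun hs => hw0 (eq_zero_of_vecMul_eq_self_of_sum_eq_zero hQpos hQrow hw hs)
  set v := (∑ i, w i)⁻¹ • w
  have hvfix : v ᵥ* Q = v := by rw [smul_vecMul, hw]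
  have hvsum : ∑ i, v i = 1 := by simp [v, ← mul_sum, hs]
  have hv0 : 0 ≤ v := (nonneg_or_nonpos_of_vecMul_eq_self hQpos hQrow hvfix).resolve_right
    fun h => by linarith [sum_nonpos fun i (_ : i ∈ univ) => h i]
  have hvne : v ≠ 0 := by rintro hv; simp [hv] at hvsum
  exact ⟨v, pos_of_vecMul_eq_self hQpos hvfix hv0 hvne, hvsum, hvfix⟩

end PositiveStochastic

end Matrix

theorem stmt11 (n : ℕ) (hn : 0 < n) (Q : Matrix (Fin n) (Fin n) ℝ)
    (hQpos : ∀ i j, 0 < Q i j) (hQrow : ∀ i, ∑ j, Q i j = 1) :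
    ∃! v : Fin n → ℝ, (∀ i, 0 < v i) ∧ (∑ i, v i = 1) ∧ Q.vecMul v = v ∧
      (∀ w : Fin n → ℝ, Q.vecMul w = w → ∃ c : ℝ, w = c • v) := by
  have : Nonempty (Fin n) := ⟨⟨0, hn⟩⟩
  obtain ⟨v, hvpos, hvsum, hvfix⟩ := exists_stationary hQpos hQrow
  refine ⟨v, ⟨hvpos, hvsum, hvfix, fun w hw => ?_⟩, ?_⟩
  · exact ⟨∑ i, w i, eq_sum_smul_of_vecMul_eq_self hQpos hQrow hvfix hvsum hw⟩
  · rintro y ⟨-, hysum, hyfix, -⟩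
    rw [eq_sum_smul_of_vecMul_eq_self hQpos hQrow hvfix hvsum hyfix, hysum, one_smul]
end

section
/- Ridge regression limit solves the normal equation: let B be an n×m real matrix and Q an n×n matrix such that the equation B·X = Q has a solution X₀ (m×n). Then the limit X̃ := lim_{λ→0⁺} (BᵀB + λ·Id)⁻¹ Bᵀ Q exists and satisfies B·X̃ = Q; moreover X̃ is the minimum-Frobenius-norm solution of B·X = Q. -/
/-!
Write `A = Bᵀ B` (positive semidefinite) and `Q = B X₀`. Then
`(A + t)⁻¹ Bᵀ Q = f_t(A) X₀` with `f_t(x) = x / (x + t)`, and `f_t` tends on the spectrum of `A`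
to the indicator of `x ≠ 0`; so the limit is `P X₀`, where `P` is the orthogonal projection onto
the range of `A`. As `B P = B`, it solves `B X = Q`. Any other solution `X` has `A (X - X₀) = 0`,
hence `P X = P X₀`, and an orthogonal projection does not increase the Frobenius norm.
-/
open Matrix Filter Topology
open scoped ComplexOrder

namespace Matrix

section FunctionalCalculus

variable {m 𝕜 : Type*} [Fintype m] [DecidableEq m] [RCLike 𝕜] {A : Matrix m m 𝕜}

noncomputable def rangeProj (A : Matrix m m 𝕜) : Matrix m m 𝕜 :=
  cfc (fun x : ℝ => if x = 0 then 0 else 1) A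

lemma continuousOn_spectrum_real (A : Matrix m m 𝕜) (f : ℝ → ℝ) :
    ContinuousOn f (spectrum ℝ A) :=
  A.finite_real_spectrum.continuousOn f

lemma isStarProjection_rangeProj : IsStarProjection (rangeProj A) where
  isIdempotentElem := by
    rw [IsIdempotentElem, rangeProj,
      ← cfc_mul _ _ A (A.continuousOn_spectrum_real _) (A.continuousOn_spectrum_real _)]
    congr 1
    ext x
    split_ifs <;> simp
  isSelfAdjoint := cfc_predicate _ _

namespace IsHermitian

lemma tendsto_cfc_fun {X : Type*} {l : Filter X} {F : X → ℝ → ℝ} {f : ℝ → ℝ}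
    (hA : A.IsHermitian) (h : ∀ x ∈ spectrum ℝ A, Tendsto (fun t => F t x) l (𝓝 (f x))) :
    Tendsto (fun t => cfc (F t) A) l (𝓝 (cfc f A)) := by
  simp only [hA.cfc_eq, IsHermitian.cfc, Unitary.conjStarAlgAut_apply]
  have hcont : Continuous fun d : m → ℝ =>
      (hA.eigenvectorUnitary : Matrix m m 𝕜) * diagonal (RCLike.ofReal ∘ d) *
        star (hA.eigenvectorUnitary : Matrix m m 𝕜) := by
    fun_prop
  exact (hcont.tendsto _).comp
    (tendsto_pi_nhds.2 fun i => h _ (hA.eigenvalues_mem_spectrum_real i))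

lemma mul_rangeProj (hA : A.IsHermitian) : A * rangeProj A = A := by
  have h := cfc_mul (fun x : ℝ => x) (fun x : ℝ => if x = 0 then 0 else 1) A
    (hg := A.continuousOn_spectrum_real _)
  rw [cfc_id' ℝ A] at h
  rw [rangeProj, ← h]
  conv_rhs => rw [← cfc_id' ℝ A]
  congr 1
  ext x
  split_ifs with hx <;> simp [hx]

lemma rangeProj_eq_cfc_inv_mul (hA : A.IsHermitian) :
    rangeProj A = cfc (fun x : ℝ => x⁻¹) A * A := by
  have h := cfc_mul (fun x : ℝ => x⁻¹) (fun x : ℝ => x) A (A.continuousOn_spectrum_real _)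
  rw [cfc_id' ℝ A] at h
  rw [rangeProj, ← h]
  congr 1
  ext x
  split_ifs with hx <;> simp [hx]

lemma rangeProj_mul_eq_zero {n : Type*} (hA : A.IsHermitian) {M : Matrix m n 𝕜}
    (hM : A * M = 0) : rangeProj A * M = 0 := by
  rw [hA.rangeProj_eq_cfc_inv_mul, Matrix.mul_assoc, hM, Matrix.mul_zero]

end IsHermitian

namespace PosSemidef

lemma nonneg_of_mem_spectrum_real (hA : A.PosSemidef) {x : ℝ} (hx : x ∈ spectrum ℝ A) :
    0 ≤ x := by
  rw [hA.isHermitian.spectrum_real_eq_range_eigenvalues] at hx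
  obtain ⟨i, rfl⟩ := hx
  exact hA.eigenvalues_nonneg i

lemma inv_add_smul_one_mul_eq_cfc (hA : A.PosSemidef) {t : ℝ} (ht : 0 < t) :
    (A + t • 1)⁻¹ * A = cfc (fun x : ℝ => (x + t)⁻¹ * x) A := by
  have hA' : IsSelfAdjoint A := hA.isHermitian
  have hne : ∀ x ∈ spectrum ℝ A, x + t ≠ 0 := fun x hx => by
    have := hA.nonneg_of_mem_spectrum_real hx
    positivity
  rw [cfc_mul _ _ A (A.continuousOn_spectrum_real _), cfc_inv _ A hne,
    cfc_add_const t (fun x : ℝ => x) A, cfc_id' ℝ A, nonsing_inv_eq_ringInverse,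
    Algebra.algebraMap_eq_smul_one]

/-- On each eigenvalue `x`, `x / (x + t)` tends to `1` if `x ≠ 0` and is `0` if `x = 0`. -/
lemma tendsto_inv_add_smul_one_mul (hA : A.PosSemidef) :
    Tendsto (fun t : ℝ => (A + t • 1)⁻¹ * A) (𝓝[>] 0) (𝓝 (rangeProj A)) := by
  refine Tendsto.congr' (eventually_nhdsWithin_of_forall fun t ht =>
    (inv_add_smul_one_mul_eq_cfc hA ht).symm) (hA.isHermitian.tendsto_cfc_fun fun x _ => ?_)
  by_cases hx : x = 0
  · simp [hx]
  · have : Tendsto (fun t : ℝ => (x + t)⁻¹ * x) (𝓝 0) (𝓝 ((x + 0)⁻¹ * x)) :=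
      (((continuous_const_add x).tendsto 0).inv₀ (by simpa using hx)).mul tendsto_const_nhds
    simpa [hx] using this.mono_left nhdsWithin_le_nhds

end PosSemidef

end FunctionalCalculus

section Real

variable {m n p : Type*} [Fintype m] [Fintype n]

lemma posSemidef_transpose_mul_self (B : Matrix n m ℝ) : (Bᵀ * B).PosSemidef := by
  simpa only [conjTranspose_eq_transpose_of_trivial] using posSemidef_conjTranspose_mul_self B

lemma transpose_mul_mul_self_of_isStarProjection {R : Matrix m m ℝ} (hR : IsStarProjection R)
    (X : Matrix m p ℝ) : (R * X)ᵀ * (R * X) = Xᵀ * (R * X) := by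
  have hRT : Rᵀ = R := by rw [← conjTranspose_eq_transpose_of_trivial]; exact hR.isSelfAdjoint
  rw [transpose_mul, hRT, Matrix.mul_assoc, ← Matrix.mul_assoc R, hR.isIdempotentElem.eq]

lemma sum_sq_eq_trace_transpose_mul_self [Fintype p] (X : Matrix m p ℝ) :
    ∑ i, ∑ j, X i j ^ 2 = (Xᵀ * X).trace := by
  simp only [trace, diag, mul_apply, transpose_apply, sq]
  exact Finset.sum_comm

variable [DecidableEq m]

lemma sum_sq_mul_le_of_isStarProjection [Fintype p] {P : Matrix m m ℝ} (hP : IsStarProjection P)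
    (X : Matrix m p ℝ) : ∑ i, ∑ j, (P * X) i j ^ 2 ≤ ∑ i, ∑ j, X i j ^ 2 := by
  have hpythagoras : Xᵀ * X = (P * X)ᵀ * (P * X) + ((1 - P) * X)ᵀ * ((1 - P) * X) := by
    rw [transpose_mul_mul_self_of_isStarProjection hP,
      transpose_mul_mul_self_of_isStarProjection hP.one_sub, ← Matrix.mul_add, ← Matrix.add_mul,
      add_sub_cancel, Matrix.one_mul]
  rw [sum_sq_eq_trace_transpose_mul_self, sum_sq_eq_trace_transpose_mul_self, hpythagoras,
    trace_add, ← sum_sq_eq_trace_transpose_mul_self ((1 - P) * X)]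
  exact le_add_of_nonneg_right (by positivity)

lemma mul_rangeProj_transpose_mul_self (B : Matrix n m ℝ) : B * rangeProj (Bᵀ * B) = B := by
  have h : (Bᴴ * B) * (1 - rangeProj (Bᵀ * B)) = 0 := by
    rw [conjTranspose_eq_transpose_of_trivial, Matrix.mul_sub, Matrix.mul_one,
      (posSemidef_transpose_mul_self B).isHermitian.mul_rangeProj, sub_self]
  rw [conjTranspose_mul_self_mul_eq_zero, Matrix.mul_sub, Matrix.mul_one, sub_eq_zero] at h
  exact h.symm

lemma rangeProj_transpose_mul_self_mul_eq {B : Matrix n m ℝ} {X Y : Matrix m p ℝ}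
    (h : B * X = B * Y) : rangeProj (Bᵀ * B) * X = rangeProj (Bᵀ * B) * Y := by
  rw [← sub_eq_zero, ← Matrix.mul_sub]
  refine (posSemidef_transpose_mul_self B).isHermitian.rangeProj_mul_eq_zero ?_
  rw [Matrix.mul_assoc, Matrix.mul_sub, h, sub_self, Matrix.mul_zero]

end Real

end Matrix

theorem stmt13 (n m : ℕ) (B : Matrix (Fin n) (Fin m) ℝ)
    (Q : Matrix (Fin n) (Fin n) ℝ)
    (hsol : ∃ X₀ : Matrix (Fin m) (Fin n) ℝ, B * X₀ = Q) :
    ∃ Xt : Matrix (Fin m) (Fin n) ℝ,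
      Tendsto (fun t : ℝ => (Bᵀ * B + t • (1 : Matrix (Fin m) (Fin m) ℝ))⁻¹ * Bᵀ * Q)
        (nhdsWithin 0 (Set.Ioi 0)) (nhds Xt) ∧
      B * Xt = Q ∧
      (∀ X : Matrix (Fin m) (Fin n) ℝ, B * X = Q →
        ∑ i, ∑ j, (Xt i j) ^ 2 ≤ ∑ i, ∑ j, (X i j) ^ 2) := by
  obtain ⟨X₀, rfl⟩ := hsol
  set P := rangeProj (Bᵀ * B)
  refine ⟨P * X₀, ?_, by rw [← Matrix.mul_assoc, mul_rangeProj_transpose_mul_self], fun X hX => ?_⟩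
  · have h : Tendsto (fun t : ℝ => (Bᵀ * B + t • 1)⁻¹ * (Bᵀ * B) * X₀) (𝓝[>] 0) (𝓝 (P * X₀)) :=
      ((continuous_id.matrix_mul continuous_const).tendsto _).comp
        (posSemidef_transpose_mul_self B).tendsto_inv_add_smul_one_mul
    simpa only [Matrix.mul_assoc] using h
  · rw [rangeProj_transpose_mul_self_mul_eq hX.symm]
    exact sum_sq_mul_le_of_isStarProjection isStarProjection_rangeProj X
end

section
/- An information structure is deterministic (partitional) if and only if the induced hypothetical belief matrix is the identity: given a strictly positive prior p on m states and an m×n row-stochastic information structure I with all signal probabilities P(s) = Σ_θ p(θ)I(θ,s) positive, let B be the Bayes posterior matrix and Q = B·I. Then Q = Id (the n×n identity) if and only if every entry of I is 0 or 1. -/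
/-! For the Bayes posterior `B`, `(B * I) s s' = (∑ θ, p θ * I θ s * I θ s') / P s`. On the diagonal
this equals `1` iff `∑ θ, p θ * I θ s * (1 - I θ s) = 0`; as the prior is positive and
`0 ≤ I θ s ≤ 1`, every term vanishes, i.e. column `s` of `I` is `0/1`-valued. Conversely, a
`0/1`-valued stochastic row has a single `1`, so off the diagonal every product
`I θ s * I θ s'` vanishes. -/

open Matrix

variable {ι κ : Type*} [Fintype ι]

lemma le_one_of_sum_eq_one [Fintype κ] {v : κ → ℝ} (hv : ∀ j, 0 ≤ v j) (hsum : ∑ j, v j = 1)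
    (j : κ) : v j ≤ 1 :=
  hsum ▸ Finset.single_le_sum (fun k _ => hv k) (Finset.mem_univ j)

lemma mul_eq_zero_of_sum_eq_one_of_zero_or_one [Fintype κ] [DecidableEq κ] {v : κ → ℝ}
    (hv : ∀ j, v j = 0 ∨ v j = 1) (hsum : ∑ j, v j = 1) {j k : κ} (hjk : j ≠ k) :
    v j * v k = 0 := by
  rcases hv j with hj | hj
  · simp [hj]
  rcases hv k with hk | hk
  · simp [hk]
  have hpair : v j + v k ≤ ∑ i, v i := by
    rw [← Finset.sum_pair hjk]
    exact Finset.sum_le_sum_of_subset_of_nonneg (Finset.subset_univ _)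
      fun i _ _ => by rcases hv i with h | h <;> simp [h]
  linarith

lemma sum_mul_mul_self_eq_sum_mul_iff {w x : ι → ℝ} (hw : ∀ i, 0 < w i) (hx₀ : ∀ i, 0 ≤ x i)
    (hx₁ : ∀ i, x i ≤ 1) :
    ∑ i, w i * x i * x i = ∑ i, w i * x i ↔ ∀ i, x i = 0 ∨ x i = 1 := by
  have hdiff : ∑ i, w i * x i - ∑ i, w i * x i * x i = ∑ i, w i * (x i - x i * x i) := by
    rw [← Finset.sum_sub_distrib]
    exact Finset.sum_congr rfl fun i _ => by ring
  have hterm_nonneg : ∀ i ∈ Finset.univ, 0 ≤ w i * (x i - x i * x i) := fun i _ =>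
    mul_nonneg (hw i).le (by nlinarith [hx₀ i, hx₁ i])
  calc ∑ i, w i * x i * x i = ∑ i, w i * x i
        ↔ ∑ i, w i * (x i - x i * x i) = 0 := by rw [← hdiff, sub_eq_zero, eq_comm]
    _ ↔ ∀ i, w i * (x i - x i * x i) = 0 := by
        simpa using Finset.sum_eq_zero_iff_of_nonneg hterm_nonneg
    _ ↔ ∀ i, IsIdempotentElem (x i) := forall_congr' fun i => by
        rw [mul_eq_zero_iff_left (hw i).ne', sub_eq_zero, eq_comm, IsIdempotentElem]
    _ ↔ ∀ i, x i = 0 ∨ x i = 1 := forall_congr' fun i => IsIdempotentElem.iff_eq_zero_or_one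

section Bayes

variable {I : Matrix ι κ ℝ} {p : ι → ℝ} {P : κ → ℝ} {B : Matrix κ ι ℝ}

lemma bayes_mul_apply (hB : ∀ s θ, B s θ = p θ * I θ s / P s) (s s' : κ) :
    (B * I) s s' = (∑ θ, p θ * I θ s * I θ s') / P s := by
  rw [mul_apply, Finset.sum_div]
  exact Finset.sum_congr rfl fun θ _ => by rw [hB]; ring

lemma bayes_mul_apply_self_eq_one_iff [Fintype κ] (hInn : ∀ θ s, 0 ≤ I θ s)
    (hIrow : ∀ θ, ∑ s, I θ s = 1) (hp : ∀ θ, 0 < p θ) (hPdef : ∀ s, P s = ∑ θ, p θ * I θ s)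
    (hP : ∀ s, 0 < P s) (hB : ∀ s θ, B s θ = p θ * I θ s / P s) (s : κ) :
    (B * I) s s = 1 ↔ ∀ θ, I θ s = 0 ∨ I θ s = 1 := by
  rw [bayes_mul_apply hB, div_eq_one_iff_eq (hP s).ne', hPdef]
  exact sum_mul_mul_self_eq_sum_mul_iff hp (fun θ => hInn θ s)
    fun θ => le_one_of_sum_eq_one (hInn θ) (hIrow θ) s

lemma bayes_mul_apply_of_ne [Fintype κ] [DecidableEq κ] (hI : ∀ θ s, I θ s = 0 ∨ I θ s = 1)
    (hIrow : ∀ θ, ∑ s, I θ s = 1) (hB : ∀ s θ, B s θ = p θ * I θ s / P s) {s s' : κ}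
    (hss' : s ≠ s') : (B * I) s s' = 0 := by
  rw [bayes_mul_apply hB, div_eq_zero_iff]
  left
  refine Finset.sum_eq_zero fun θ _ => ?_
  rw [mul_assoc, mul_eq_zero_of_sum_eq_one_of_zero_or_one (hI θ) (hIrow θ) hss', mul_zero]

end Bayes

theorem stmt17_general (m n : ℕ) (I : Matrix (Fin m) (Fin n) ℝ)
    (hInn : ∀ θ s, 0 ≤ I θ s) (hIrow : ∀ θ, ∑ s, I θ s = 1)
    (p : Fin m → ℝ) (hp : ∀ θ, 0 < p θ)
    (P : Fin n → ℝ) (hPdef : ∀ s, P s = ∑ θ, p θ * I θ s) (hP : ∀ s, 0 < P s)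
    (B : Matrix (Fin n) (Fin m) ℝ)
    (hB : ∀ s θ, B s θ = p θ * I θ s / P s)
    (Q : Matrix (Fin n) (Fin n) ℝ) (hQ : Q = B * I) :
    Q = 1 ↔ ∀ θ s, I θ s = 0 ∨ I θ s = 1 := by
  subst hQ
  have hdiag := bayes_mul_apply_self_eq_one_iff hInn hIrow hp hPdef hP hB
  constructor
  · intro h θ s
    exact (hdiag s).1 (by rw [h, one_apply_eq]) θ
  · intro h
    ext s s'
    rcases eq_or_ne s s' with rfl | hss'
    · rw [one_apply_eq]
      exact (hdiag s).2 fun θ => h θ s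
    · rw [one_apply_ne hss']
      exact bayes_mul_apply_of_ne h hIrow hB hss'

theorem stmt17 (m n : ℕ) (I : Matrix (Fin m) (Fin n) ℝ)
    (hInn : ∀ θ s, 0 ≤ I θ s) (hIrow : ∀ θ, ∑ s, I θ s = 1)
    (p : Fin m → ℝ) (hp : ∀ θ, 0 < p θ) (hpsum : ∑ θ, p θ = 1)
    (P : Fin n → ℝ) (hPdef : ∀ s, P s = ∑ θ, p θ * I θ s) (hP : ∀ s, 0 < P s)
    (B : Matrix (Fin n) (Fin m) ℝ)
    (hB : ∀ s θ, B s θ = p θ * I θ s / P s)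
    (Q : Matrix (Fin n) (Fin n) ℝ) (hQ : Q = B * I) :
    Q = 1 ↔ ∀ θ s, I θ s = 0 ∨ I θ s = 1 :=
  stmt17_general m n I hInn hIrow p hp P hPdef hP B hB Q hQ
end
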